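/- arXiv:1102.1225 — 2 statements merged into one kernel-verified Lean document; each statement's English description precedes it below -/
import Mathlib

section
/- Let E be a directed graph. The path space E* ∪ E^∞ with the topology whose basic open sets are Z(μ∖G) (μ ∈ E*, G ⊆ s(μ)E¹ finite) is a Hausdorff topological space. -/
structure DirectedGraph where
  V : Type
  E : Type
  r : E → V
  s : E → V

namespace DirectedGraph

variable {G : DirectedGraph}

/-- A finite path: a list of edges `μ₁ … μₙ` with `s μᵢ = r μᵢ₊₁`, together with its
range vertex (which is the range of the first edge when the path is nonempty, and is
the defining datum of the path when the path has length zero, i.e. is a vertex). -/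
structure FinPath (G : DirectedGraph) where
  vtx : G.V
  edges : List G.E
  chain : edges.Chain' fun e f => G.s e = G.r f
  hv : ∀ e ∈ edges.head?, G.r e = vtx

/-- An infinite path `μ₁μ₂…` with `s μᵢ = r μᵢ₊₁`. -/
structure InfPath (G : DirectedGraph) where
  edge : ℕ → G.E
  chain : ∀ n, G.s (edge n) = G.r (edge (n + 1))

/-- The path space `E* ∪ E^∞`. -/
abbrev PathSpace (G : DirectedGraph) := FinPath G ⊕ InfPath G

namespace FinPath

def length (μ : FinPath G) : ℕ := μ.edges.length

def range (μ : FinPath G) : G.V := μ.vtx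

def source (μ : FinPath G) : G.V := (μ.edges.getLast?).elim μ.vtx G.s

/-- A vertex, regarded as a path of length zero. -/
def ofVertex (G : DirectedGraph) (v : G.V) : FinPath G :=
  ⟨v, [], List.isChain_nil, by simp⟩

/-- `μ.Extends ν` means `μ = νν′` for some path `ν′`. -/
def Extends (μ ν : FinPath G) : Prop := μ.vtx = ν.vtx ∧ ν.edges <+: μ.edges

end FinPath

def InfPath.range (x : InfPath G) : G.V := G.r (x.edge 0)

/-- `x.Extends ν` means the infinite path `x` is of the form `νx′`. -/
def InfPath.Extends (x : InfPath G) (ν : FinPath G) : Prop :=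
  (ν.edges = [] → x.range = ν.vtx) ∧
  ∀ i, (h : i < ν.edges.length) → x.edge i = ν.edges.get ⟨i, h⟩

/-- The cylinder set `Z(μ) = {w ∈ E* ∪ E^∞ : w = μw′}`. -/
def Cyl (μ : FinPath G) : Set (PathSpace G) :=
  {w | match w with
       | Sum.inl lam => lam.Extends μ
       | Sum.inr x => x.Extends μ}

/-- The cylinder set `Z(μe)` of the path `μ` followed by the edge `e`. -/
def CylSnoc (μ : FinPath G) (e : G.E) : Set (PathSpace G) :=
  {w | match w with
       | Sum.inl lam => (μ.edges ++ [e]) <+: lam.edges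
       | Sum.inr x => ∀ i, (h : i < (μ.edges ++ [e]).length) →
           x.edge i = (μ.edges ++ [e]).get ⟨i, h⟩}

/-- `Z(μ∖G) := Z(μ) ∖ ⋃_{e ∈ G} Z(μe)`. -/
def CylMinus (μ : FinPath G) (GS : Finset G.E) : Set (PathSpace G) :=
  Cyl μ \ ⋃ e ∈ GS, CylSnoc μ e

/-- The basic sets `Z(μ∖G)` for `μ ∈ E*` and `G ⊆ s(μ)E¹` finite. -/
def basicSets (G : DirectedGraph) : Set (Set (PathSpace G)) :=
  {S | ∃ (μ : FinPath G) (GS : Finset G.E),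
        (∀ e ∈ GS, G.r e = μ.source) ∧ S = CylMinus μ GS}

end DirectedGraph

/-!
Every cylinder `Z(ν)` is clopen. It is open, being `Z(ν∖∅)`. It is closed: if an infinite path
`x` does not extend `ν`, its initial segment of length `|ν|` is a different path of the same
length, whose cylinder misses `Z(ν)`; if a finite path `μ` does not extend `ν`, then either `μ` and
`ν` are incomparable and `Z(μ)` misses `Z(ν)`, or `ν = μ e ν'` and `Z(μ∖{e})` is a neighbourhood of
`μ` missing `Z(ν)`. Cylinders also separate points: of two distinct paths, either one has an
initial segment the other lacks, or one is a finite path `μ` and the other extends it, and then a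
cylinder of an initial segment longer than `μ` excludes `μ`. So the path space is totally
separated, hence Hausdorff.
-/

namespace DirectedGraph

variable {G : DirectedGraph}

namespace FinPath

@[ext]
theorem ext {μ ν : FinPath G} (hv : μ.vtx = ν.vtx) (he : μ.edges = ν.edges) : μ = ν := by
  cases μ; cases ν; simp_all

theorem Extends.refl (μ : FinPath G) : μ.Extends μ := ⟨rfl, List.prefix_refl _⟩

theorem Extends.eq_of_length_le {μ ν : FinPath G} (h : μ.Extends ν)
    (hl : μ.edges.length ≤ ν.edges.length) : μ = ν :=
  ext h.1 (h.2.eq_of_length (le_antisymm h.2.length_le hl)).symm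

theorem Extends.antisymm {μ ν : FinPath G} (h₁ : μ.Extends ν) (h₂ : ν.Extends μ) : μ = ν :=
  h₁.eq_of_length_le h₂.2.length_le

theorem Extends.exists_snoc_prefix {μ ν : FinPath G} (h : μ.Extends ν) (hne : μ ≠ ν) :
    ∃ a, ν.edges ++ [a] <+: μ.edges := by
  obtain ⟨_ | ⟨a, t⟩, ht⟩ := h.2
  · exact absurd (ext h.1 (by simpa using ht.symm)) hne
  · exact ⟨a, t, by simpa using ht⟩

theorem Extends.source_eq {μ ν : FinPath G} (h : μ.Extends ν) {a : G.E}
    (ha : ν.edges ++ [a] <+: μ.edges) : ν.source = G.r a := by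
  obtain ⟨t, ht⟩ := ha
  rcases List.eq_nil_or_concat' ν.edges with hν | ⟨l, b, hν⟩
  · rw [hν] at ht
    simp only [source, hν, List.getLast?_nil, Option.elim_none, ← h.1]
    exact (μ.hv a (by simp [← ht])).symm
  · have hc := μ.chain
    rw [← ht, hν] at hc
    simp only [List.append_assoc, List.cons_append, List.nil_append] at hc
    simp only [source, hν, List.getLast?_concat, Option.elim_some]
    exact (List.isChain_append_cons_cons.1 hc).2.1

end FinPath

namespace InfPath

@[ext]
theorem ext {x y : InfPath G} (h : x.edge = y.edge) : x = y := by
  cases x; cases y; simp_all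

def take (x : InfPath G) (n : ℕ) : FinPath G where
  vtx := x.range
  edges := List.ofFn fun i : Fin n => x.edge i
  chain := List.isChain_ofFn.2 fun i _ => x.chain i
  hv e he := by
    cases n with
    | zero => simp at he
    | succ n => simp [List.ofFn_succ] at he; simp [← he, range]

@[simp]
theorem take_length (x : InfPath G) (n : ℕ) : (x.take n).edges.length = n := by
  simp [take]

@[simp]
theorem take_getElem (x : InfPath G) (n i : ℕ) (h : i < (x.take n).edges.length) :
    (x.take n).edges[i] = x.edge i := by
  simp [take]

theorem extends_take (x : InfPath G) (n : ℕ) : x.Extends (x.take n) :=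
  ⟨fun _ => rfl, fun i hi => by simp⟩

theorem extends_iff_take_eq {x : InfPath G} {ν : FinPath G} :
    x.Extends ν ↔ x.take ν.edges.length = ν := by
  refine ⟨fun ⟨hnil, hedge⟩ => ?_, fun h => h ▸ extends_take x _⟩
  have hvtx : x.range = ν.vtx := by
    rcases hν : ν.edges with _ | ⟨a, t⟩
    · exact hnil hν
    · have h₀ := hedge 0 (by simp [hν])
      simp only [hν, List.get_eq_getElem, List.getElem_cons_zero] at h₀
      rw [range, h₀]
      exact ν.hv a (by simp [hν])
  refine FinPath.ext hvtx (List.ext_getElem (by simp) fun i _ hi => ?_)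
  simpa using hedge i hi

theorem take_extends_take (x : InfPath G) {m n : ℕ} (h : m ≤ n) :
    (x.take n).Extends (x.take m) :=
  ⟨rfl, List.prefix_iff_eq_take.2 (List.ext_getElem (by simp [h]) fun i _ _ => by simp)⟩

theorem exists_take_ne {x y : InfPath G} (h : x ≠ y) : ∃ n, x.take n ≠ y.take n := by
  obtain ⟨n, hn⟩ := Function.ne_iff.1 fun h' => h (ext h')
  refine ⟨n + 1, fun htake => hn ?_⟩
  simpa using congrArg (fun μ : FinPath G => μ.edges[n]?) htake

end InfPath

open FinPath InfPath

theorem mem_cyl_inr {x : InfPath G} {ν : FinPath G} :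
    (.inr x : PathSpace G) ∈ Cyl ν ↔ x.take ν.edges.length = ν :=
  extends_iff_take_eq

theorem extends_or_extends_of_mem_cyl {μ ν : FinPath G} {w : PathSpace G} (hμ : w ∈ Cyl μ)
    (hν : w ∈ Cyl ν) : μ.Extends ν ∨ ν.Extends μ := by
  rcases w with lam | x
  · rcases List.prefix_or_prefix_of_prefix hμ.2 hν.2 with h | h
    · exact .inr ⟨hν.1.symm.trans hμ.1, h⟩
    · exact .inl ⟨hμ.1.symm.trans hν.1, h⟩
  · rw [mem_cyl_inr] at hμ hν
    rcases le_total μ.edges.length ν.edges.length with h | h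
    · exact .inr (hμ ▸ hν ▸ take_extends_take x h)
    · exact .inl (hμ ▸ hν ▸ take_extends_take x h)

theorem disjoint_cyl {μ ν : FinPath G} (h₁ : ¬ μ.Extends ν) (h₂ : ¬ ν.Extends μ) :
    Disjoint (Cyl μ) (Cyl ν) :=
  Set.disjoint_left.2 fun _ hμ hν => (extends_or_extends_of_mem_cyl hμ hν).elim h₁ h₂

theorem cyl_subset_cylSnoc {μ ν : FinPath G} {a : G.E} (ha : ν.edges ++ [a] <+: μ.edges) :
    Cyl μ ⊆ CylSnoc ν a := by
  rintro (lam | x) hw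
  · exact ha.trans hw.2
  · intro i hi
    have hx := hw.2 i (lt_of_lt_of_le hi ha.length_le)
    simp only [List.get_eq_getElem] at hx ⊢
    rw [hx, ha.getElem hi]

theorem inl_notMem_cylSnoc (μ : FinPath G) (a : G.E) : (.inl μ : PathSpace G) ∉ CylSnoc μ a :=
  fun h => by simpa using (h : μ.edges ++ [a] <+: μ.edges).length_le

theorem exists_cyl_inr_mem_inl_notMem (x : InfPath G) (μ : FinPath G) :
    ∃ ν, (.inr x : PathSpace G) ∈ Cyl ν ∧ (.inl μ : PathSpace G) ∉ Cyl ν :=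
  ⟨x.take (μ.edges.length + 1), extends_take x _, fun hμ => by simpa using hμ.2.length_le⟩

theorem exists_cyl_mem_notMem {w₁ w₂ : PathSpace G} (h : w₁ ≠ w₂) :
    ∃ ν, w₁ ∈ Cyl ν ∧ w₂ ∉ Cyl ν ∨ w₂ ∈ Cyl ν ∧ w₁ ∉ Cyl ν := by
  rcases w₁ with μ | x <;> rcases w₂ with ν | y
  · by_cases hμν : μ.Extends ν
    · exact ⟨μ, .inl ⟨.refl μ, fun hνμ => h (congrArg _ (hμν.antisymm hνμ))⟩⟩
    · exact ⟨ν, .inr ⟨.refl ν, hμν⟩⟩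
  · obtain ⟨ν, hν⟩ := exists_cyl_inr_mem_inl_notMem y μ
    exact ⟨ν, .inr hν⟩
  · obtain ⟨μ, hμ⟩ := exists_cyl_inr_mem_inl_notMem x ν
    exact ⟨μ, .inl hμ⟩
  · obtain ⟨n, hn⟩ := exists_take_ne fun hxy => h (congrArg _ hxy)
    refine ⟨x.take n, .inl ⟨extends_take x n, fun hy => hn ?_⟩⟩
    simpa using (mem_cyl_inr.1 hy).symm

instance : TopologicalSpace (PathSpace G) := .generateFrom (basicSets G)

theorem isOpen_of_mem_basicSets {U : Set (PathSpace G)} (hU : U ∈ basicSets G) : IsOpen U :=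
  TopologicalSpace.isOpen_generateFrom_of_mem hU

theorem isOpen_cyl (μ : FinPath G) : IsOpen (Cyl μ) :=
  isOpen_of_mem_basicSets ⟨μ, ∅, by simp, by simp [CylMinus]⟩

theorem exists_isOpen_mem_disjoint_cyl {w : PathSpace G} {ν : FinPath G} (hw : w ∉ Cyl ν) :
    ∃ U, IsOpen U ∧ w ∈ U ∧ Disjoint U (Cyl ν) := by
  rcases w with μ | x
  · by_cases hνμ : ν.Extends μ
    · obtain ⟨a, ha⟩ := hνμ.exists_snoc_prefix fun h => hw (h ▸ .refl ν)
      refine ⟨CylMinus μ {a}, isOpen_of_mem_basicSets ⟨μ, {a}, ?_, rfl⟩,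
        ⟨.refl μ, by simpa using inl_notMem_cylSnoc μ a⟩,
        Set.disjoint_left.2 fun _ hU hν => hU.2 (by simpa using cyl_subset_cylSnoc ha hν)⟩
      simpa using (hνμ.source_eq ha).symm
    · exact ⟨Cyl μ, isOpen_cyl μ, .refl μ, disjoint_cyl hw hνμ⟩
  · rw [mem_cyl_inr] at hw
    refine ⟨Cyl (x.take ν.edges.length), isOpen_cyl _, extends_take x _,
      disjoint_cyl (fun h => hw (h.eq_of_length_le (by simp)))
        (fun h => hw (h.eq_of_length_le (by simp)).symm)⟩

theorem isClopen_cyl (μ : FinPath G) : IsClopen (Cyl μ) := by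
  refine ⟨isOpen_compl_iff.1 (isOpen_iff_forall_mem_open.2 fun w hw => ?_), isOpen_cyl μ⟩
  obtain ⟨U, hU, hwU, hdisj⟩ := exists_isOpen_mem_disjoint_cyl hw
  exact ⟨U, Set.subset_compl_iff_disjoint_right.2 hdisj, hU, hwU⟩

instance : TotallySeparatedSpace (PathSpace G) := by
  refine totallySeparatedSpace_iff_exists_isClopen.2 fun w₁ w₂ h => ?_
  obtain ⟨ν, ⟨h₁, h₂⟩ | ⟨h₂, h₁⟩⟩ := exists_cyl_mem_notMem h
  · exact ⟨Cyl ν, isClopen_cyl ν, h₁, h₂⟩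
  · exact ⟨(Cyl ν)ᶜ, (isClopen_cyl ν).compl, h₁, by simpa using h₂⟩

end DirectedGraph

open DirectedGraph in
/-- The path space with the cylinder-set topology is Hausdorff. -/
theorem pathSpace_t2 (G : DirectedGraph) :
    @T2Space (PathSpace G) (TopologicalSpace.generateFrom (basicSets G)) :=
  inferInstance
end

section
/- Let μ be a collapsible path in a row-finite directed graph F. Then every infinite path λ ∈ F^∞ whose range is a vertex of F_μ⁰ = F⁰ ∖ {s(μᵢ) : i ≥ 1} either factors as λ = l¹…lᵏμ with each lⁱ ∈ (F¹ ∩ E¹) ∪ F*(μ), or factors as an infinite concatenation λ = l¹l²… with each lⁱ ∈ (F¹ ∩ E¹) ∪ F*(μ), where F*(μ) := {ν ∈ F* : |ν| > 1, ν = μ₁…μ_{|ν|−1}e for some edge e ≠ μ_{|ν|}}. -/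
namespace DirectedGraph

variable {G : DirectedGraph}

/-- (C1) an infinite path has no exits: any edge sharing a source with an edge of the
path is that edge. -/
def HasNoExits (mu : InfPath G) : Prop :=
  ∀ (e : G.E) (i : ℕ), G.s e = G.s (mu.edge i) → e = mu.edge i

/-- The entries of an infinite path: edges into a vertex of the path other than the
edges of the path itself. -/
def entries (mu : InfPath G) : Set G.E :=
  {e | ∃ i, G.r e = G.r (mu.edge i) ∧ e ≠ mu.edge i}

/-- A collapsible infinite path: (C1) no exits, (C2) each vertex on it receives finitely
many edges, (C3) its range receives only its first edge, (C4) its edges are distinct,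
(C5) it has zero or infinitely many entries. -/
def Collapsible (mu : InfPath G) : Prop :=
  HasNoExits mu ∧
  (∀ i, (G.r ⁻¹' {G.r (mu.edge i)}).Finite) ∧
  (G.r ⁻¹' {mu.range} = {mu.edge 0}) ∧
  Function.Injective mu.edge ∧
  (entries mu = ∅ ∨ (entries mu).Infinite)

/-- F*(mu): finite paths nu with |nu| > 1 of the form mu₁…mu_{|nu|-1}e with
e ≠ mu_{|nu|}. -/
def CollCand (mu : InfPath G) : Set (FinPath G) :=
  {nu | 1 < nu.edges.length ∧
        (∀ i, i + 1 < nu.edges.length → nu.edges[i]? = some (mu.edge i)) ∧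
        nu.edges[nu.edges.length - 1]? ≠ some (mu.edge (nu.edges.length - 1))}

/-- s_∞(M): the sources of the edges of the paths in M. -/
def sInfSet (M : Set (InfPath G)) : Set G.V :=
  {v | ∃ mu ∈ M, ∃ i, v = G.s (mu.edge i)}

/-- The edges of the graph kept (unchanged) when collapsing the paths in M:
F¹ ∖ (r⁻¹(s_∞(M)) ∪ {first edges of paths in M}). -/
def Kept (M : Set (InfPath G)) : Set G.E :=
  {e | G.r e ∉ sInfSet M ∧ ∀ mu ∈ M, e ≠ mu.edge 0}

/-- The paths in M are pairwise disjoint: distinct paths share no edges and no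
vertices. -/
def DisjointPaths (M : Set (InfPath G)) : Prop :=
  ∀ mu ∈ M, ∀ nu ∈ M, mu ≠ nu →
    (∀ i j, mu.edge i ≠ nu.edge j) ∧ (∀ i j, G.r (mu.edge i) ≠ G.r (nu.edge j))

/-- The graph obtained by collapsing the paths in M: vertices are those not of the form
s(muᵢ); edges are the kept edges together with an edge e_nu for each nu ∈ F*(mu),
mu ∈ M.  (The subtype conditions on sources and ranges hold automatically when the
paths of M are disjoint and collapsible.) -/
def Collapsed (G : DirectedGraph) (M : Set (InfPath G)) : DirectedGraph where
  V := {v : G.V // v ∉ sInfSet M}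
  E := {e : G.E // e ∈ Kept M ∧ G.s e ∉ sInfSet M} ⊕
       {p : InfPath G × FinPath G // p.1 ∈ M ∧ p.2 ∈ CollCand p.1 ∧
          p.2.vtx ∉ sInfSet M ∧ p.2.source ∉ sInfSet M}
  r := fun x => match x with
    | Sum.inl e => ⟨G.r e.1, e.2.1.1⟩
    | Sum.inr p => ⟨p.1.2.vtx, p.2.2.2.1⟩
  s := fun x => match x with
    | Sum.inl e => ⟨G.s e.1, e.2.2⟩
    | Sum.inr p => ⟨p.1.2.source, p.2.2.2.2⟩

/-- The vertex of the collapsed graph, as a vertex of the original graph. -/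
def collV (M : Set (InfPath G)) (v : (Collapsed G M).V) : G.V := v.1

/-- The list of edges of the original graph underlying an edge of the collapsed
graph. -/
def segEdges (M : Set (InfPath G)) : (Collapsed G M).E → List G.E
  | Sum.inl e => [e.1]
  | Sum.inr p => p.1.2.edges

/-- A finite list of edges is an initial segment of an infinite path. -/
def IsPrefixOfInf (l : List G.E) (x : InfPath G) : Prop :=
  ∀ i, (h : i < l.length) → x.edge i = l.get ⟨i, h⟩

end DirectedGraph


namespace DirectedGraph

/-- The segments from which paths in the desingularised graph are built: single kept
edges (edges of F¹ ∩ E¹) and paths in F*(mu). -/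
def SegSet (G : DirectedGraph) (mu : InfPath G) : Set (FinPath G) :=
  {nu | (∃ e ∈ Kept ({mu} : Set (InfPath G)), nu.edges = [e]) ∨ nu ∈ CollCand mu}

end DirectedGraph


/-!
Read `lam` greedily from the front, keeping the invariant that the current position has range
outside `s_∞(mu)`. If the next edge is not `mu₁`, it is a kept edge. Otherwise `lam` runs along
`mu`: either forever, and we stop, or up to a first deviating edge, and that stretch lies in
`F*(mu)`. In both cases the last edge taken is not an edge of `mu` (by (C1), (C3), (C4) for an edge
entering `mu`), so, `mu` having no exits, its source lies outside `s_∞(mu)` and the invariant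
persists. The procedure either reaches a position from which `lam` is `mu`, or runs forever.
-/

namespace DirectedGraph

variable {G : DirectedGraph}

def cutPos (d : ℕ → ℕ) (n : ℕ) : ℕ := (fun k => k + (d k + 1))^[n] 0

lemma cutPos_succ (d : ℕ → ℕ) (n : ℕ) :
    cutPos d (n + 1) = cutPos d n + (d (cutPos d n) + 1) :=
  Function.iterate_succ_apply' _ n 0

lemma cutPos_invariant {P Q : ℕ → Prop} {d : ℕ → ℕ} (h0 : P 0)
    (hstep : ∀ k, P k → Q k → P (k + (d k + 1))) {n : ℕ} (hQ : ∀ i < n, Q (cutPos d i)) :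
    P (cutPos d n) := by
  induction n with
  | zero => exact h0
  | succ n ih =>
    rw [cutPos_succ]
    exact hstep _ (ih fun i hi => hQ i (by omega)) (hQ n (by omega))

/-- The finite path `x_k x_{k+1} … x_{k+m}`, with `m + 1` edges. -/
def InfPath.slice (x : InfPath G) (k m : ℕ) : FinPath G where
  vtx := G.r (x.edge k)
  edges := (List.range' k (m + 1)).map x.edge
  chain := by
    refine (List.isChain_map x.edge).2 ((List.isChain_range' k (m + 1) 1).imp ?_)
    rintro a _ rfl
    exact x.chain a
  hv := by simp [List.range'_succ]

namespace InfPath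

variable (x : InfPath G)

lemma slice_edges_length (k m : ℕ) : (x.slice k m).edges.length = m + 1 := by
  simp [slice]

lemma slice_edges_getElem? (k m i : ℕ) (hi : i < m + 1) :
    (x.slice k m).edges[i]? = some (x.edge (k + i)) := by
  simp [slice, List.getElem?_range' hi]

lemma isPrefixOfInf_map_range (n : ℕ) : IsPrefixOfInf ((List.range n).map x.edge) x := by
  intro i hi
  simp

lemma flatMap_slice_cutPos (d : ℕ → ℕ) (n : ℕ) :
    (List.ofFn fun i : Fin n => x.slice (cutPos d i) (d (cutPos d i))).flatMap FinPath.edges =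
      (List.range (cutPos d n)).map x.edge := by
  induction n with
  | zero => rfl
  | succ n ih =>
    rw [List.ofFn_succ', List.concat_eq_append, List.flatMap_append]
    simp only [Fin.val_castSucc, Fin.val_last]
    rw [ih, cutPos_succ, List.range_eq_range', List.range_eq_range', ← List.range'_append]
    simp [slice]

end InfPath

variable {mu : InfPath G}

lemma mem_sInfSet_singleton {v : G.V} :
    v ∈ sInfSet ({mu} : Set (InfPath G)) ↔ ∃ i, v = G.s (mu.edge i) := by
  simp [sInfSet]

lemma range_edge_succ_mem_sInfSet (i : ℕ) :
    G.r (mu.edge (i + 1)) ∈ sInfSet ({mu} : Set (InfPath G)) :=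
  mem_sInfSet_singleton.2 ⟨i, (mu.chain i).symm⟩

lemma ne_edge_of_range_notMem_sInfSet {f : G.E}
    (hf : G.r f ∉ sInfSet ({mu} : Set (InfPath G))) (hf0 : f ≠ mu.edge 0) (i : ℕ) :
    f ≠ mu.edge i := by
  rintro rfl
  cases i with
  | zero => exact hf0 rfl
  | succ i => exact hf (range_edge_succ_mem_sInfSet i)

lemma HasNoExits.source_notMem_sInfSet (hmu : HasNoExits mu) {f : G.E}
    (hf : ∀ i, f ≠ mu.edge i) : G.s f ∉ sInfSet ({mu} : Set (InfPath G)) := by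
  intro hs
  obtain ⟨i, hi⟩ := mem_sInfSet_singleton.1 hs
  exact hf i (hmu f i hi)

lemma Collapsible.ne_edge_of_entry (hcol : Collapsible mu) {f : G.E} {j : ℕ} (hj : 0 < j)
    (hrf : G.r f = G.r (mu.edge j)) (hfj : f ≠ mu.edge j) (m : ℕ) : f ≠ mu.edge m := by
  obtain ⟨hexit, -, hrange, hinj, -⟩ := hcol
  rintro rfl
  cases m with
  | zero =>
    have : mu.edge j ∈ G.r ⁻¹' {mu.range} := by simp [InfPath.range, ← hrf]
    rw [hrange] at this
    exact hj.ne' (hinj this)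
  | succ m =>
    cases j with
    | zero => exact absurd hj (lt_irrefl 0)
    | succ j =>
      have hs : G.s (mu.edge m) = G.s (mu.edge j) := by
        rw [mu.chain, mu.chain]
        exact hrf
      exact hfj (by rw [hinj (hexit _ _ hs)])

section Factorisation

variable {lam : InfPath G}

def AgreesFrom (mu lam : InfPath G) (k : ℕ) : Prop := ∀ i, lam.edge (k + i) = mu.edge i

lemma slice_zero_mem_segSet {k : ℕ} (hk : lam.edge k ∈ Kept ({mu} : Set (InfPath G))) :
    lam.slice k 0 ∈ SegSet G mu :=
  Or.inl ⟨lam.edge k, hk, by simp [InfPath.slice]⟩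

lemma slice_mem_collCand {k j : ℕ} (hj : 0 < j) (hagree : ∀ i < j, lam.edge (k + i) = mu.edge i)
    (hdev : lam.edge (k + j) ≠ mu.edge j) : lam.slice k j ∈ CollCand mu := by
  refine ⟨by rw [InfPath.slice_edges_length]; omega, fun i hi => ?_, ?_⟩
  · rw [InfPath.slice_edges_length] at hi
    rw [InfPath.slice_edges_getElem? _ _ _ _ (by omega), hagree i (by omega)]
  · rw [InfPath.slice_edges_length, Nat.add_sub_cancel,
      InfPath.slice_edges_getElem? _ _ _ _ (by omega)]
    simpa using hdev

lemma Collapsible.exists_slice_mem_segSet (hcol : Collapsible mu) {k : ℕ}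
    (hk : G.r (lam.edge k) ∉ sInfSet ({mu} : Set (InfPath G))) (hnot : ¬ AgreesFrom mu lam k) :
    ∃ m, lam.slice k m ∈ SegSet G mu ∧
      G.r (lam.edge (k + (m + 1))) ∉ sInfSet ({mu} : Set (InfPath G)) := by
  suffices ∃ m, lam.slice k m ∈ SegSet G mu ∧ ∀ i, lam.edge (k + m) ≠ mu.edge i by
    obtain ⟨m, hseg, hne⟩ := this
    refine ⟨m, hseg, ?_⟩
    rw [← Nat.add_assoc, ← lam.chain]
    exact hcol.1.source_notMem_sInfSet hne
  by_cases h0 : lam.edge k = mu.edge 0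
  · have hdev : ∃ i, lam.edge (k + i) ≠ mu.edge i := by simpa [AgreesFrom] using hnot
    classical
    set j := Nat.find hdev
    have hfj : lam.edge (k + j) ≠ mu.edge j := Nat.find_spec hdev
    have hagree : ∀ i < j, lam.edge (k + i) = mu.edge i :=
      fun i hi => not_not.1 (Nat.find_min hdev hi)
    have hj : 0 < j := Nat.pos_of_ne_zero fun hj0 => hfj (by simpa [hj0] using h0)
    have hrange : G.r (lam.edge (k + j)) = G.r (mu.edge j) := by
      obtain ⟨i, hi⟩ := Nat.exists_eq_add_of_lt hj
      rw [hi, zero_add, ← mu.chain, ← hagree i (by omega), lam.chain, Nat.add_assoc]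
    exact ⟨j, Or.inr (slice_mem_collCand hj hagree hfj),
      hcol.ne_edge_of_entry hj hrange hfj⟩
  · refine ⟨0, slice_zero_mem_segSet ⟨hk, ?_⟩, ne_edge_of_range_notMem_sInfSet hk h0⟩
    rintro _ rfl
    exact h0

end Factorisation

end DirectedGraph

open DirectedGraph in
theorem infPath_factorisation_general (F : DirectedGraph) (mu : InfPath F)
    (hcol : Collapsible mu)
    (lam : InfPath F) (hlam : lam.range ∉ sInfSet ({mu} : Set (InfPath F))) :
    (∃ segs : List (FinPath F), (∀ nu ∈ segs, nu ∈ SegSet F mu) ∧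
        IsPrefixOfInf (segs.flatMap FinPath.edges) lam ∧
        ∀ i, lam.edge ((segs.flatMap FinPath.edges).length + i) = mu.edge i) ∨
    (∃ seg : ℕ → FinPath F, (∀ n, seg n ∈ SegSet F mu) ∧
        ∀ n, IsPrefixOfInf
          ((List.ofFn fun i : Fin n => seg i).flatMap FinPath.edges) lam) := by
  classical
  choose! d hd using fun k (hk : F.r (lam.edge k) ∉ sInfSet ({mu} : Set (InfPath F)))
    (hnot : ¬ AgreesFrom mu lam k) => hcol.exists_slice_mem_segSet hk hnot
  set p := cutPos d
  have hgood : ∀ n, (∀ i < n, ¬ AgreesFrom mu lam (p i)) →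
      F.r (lam.edge (p n)) ∉ sInfSet ({mu} : Set (InfPath F)) :=
    fun n => cutPos_invariant (P := fun k => F.r (lam.edge k) ∉ sInfSet {mu}) hlam
      fun k hk hnot => (hd k hk hnot).2
  have hseg : ∀ n, (∀ i ≤ n, ¬ AgreesFrom mu lam (p i)) →
      lam.slice (p n) (d (p n)) ∈ SegSet F mu :=
    fun n hnot => (hd _ (hgood n fun i hi => hnot i hi.le) (hnot n le_rfl)).1
  by_cases hagree : ∃ n, AgreesFrom mu lam (p n)
  · refine Or.inl ⟨List.ofFn fun i : Fin (Nat.find hagree) => lam.slice (p i) (d (p i)),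
      ?_, ?_, ?_⟩
    · simp only [List.mem_ofFn]
      rintro _ ⟨i, rfl⟩
      exact hseg i fun j hj => Nat.find_min hagree (by omega)
    · rw [InfPath.flatMap_slice_cutPos]
      exact lam.isPrefixOfInf_map_range _
    · rw [InfPath.flatMap_slice_cutPos, List.length_map, List.length_range]
      exact Nat.find_spec hagree
  · push Not at hagree
    refine Or.inr ⟨fun n => lam.slice (p n) (d (p n)), fun n => hseg n fun i _ => hagree i,
      fun n => ?_⟩
    rw [InfPath.flatMap_slice_cutPos]
    exact lam.isPrefixOfInf_map_range _

open DirectedGraph in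
/-- every infinite path lam of F whose range is a vertex of the collapsed
graph either factors as lam = l¹…lᵏmu with each lⁱ ∈ (F¹ ∩ E¹) ∪ F*(mu), or as an
infinite concatenation lam = l¹l²… of such segments. -/
theorem infPath_factorisation (F : DirectedGraph) (mu : InfPath F)
    (hcol : Collapsible mu) (hrf : ∀ v : F.V, (F.r ⁻¹' {v}).Finite)
    (lam : InfPath F) (hlam : lam.range ∉ sInfSet ({mu} : Set (InfPath F))) :
    (∃ segs : List (FinPath F), (∀ nu ∈ segs, nu ∈ SegSet F mu) ∧
        IsPrefixOfInf (segs.flatMap FinPath.edges) lam ∧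
        ∀ i, lam.edge ((segs.flatMap FinPath.edges).length + i) = mu.edge i) ∨
    (∃ seg : ℕ → FinPath F, (∀ n, seg n ∈ SegSet F mu) ∧
        ∀ n, IsPrefixOfInf
          ((List.ofFn fun i : Fin n => seg i).flatMap FinPath.edges) lam) :=
  infPath_factorisation_general F mu hcol lam hlam
end
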